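/- Let k be a field and A a bicommutative Hopf algebra over k. Then A has a finite volume (i.e. A admits a normalized integral σ and a normalized cointegral λ with λ(σ) ≠ 0) if and only if A is finite-dimensional over k and the image (Module.finrank k A : k) of its dimension in k is nonzero. -/

import Mathlib

/-
For an integral `σ` and a cointegral `λ`, the integral identity `(1 ⊗ a) Δσ = (S a ⊗ 1) Δσ`
gives `∑ λ(S(a) σ₁) σ₂ = λ(σ) a`: the scalar `λ(σ)` times the identity is a finite sum of
rank-one maps. If `λ(σ) ≠ 0` this makes `A` finite-dimensional, and taking traces (using
cocommutativity to swap `σ₁, σ₂`) gives `λ(σ) · dim A = ε(σ) λ(1)`.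

Conversely, if `A` is finite-dimensional it is an artinian ring, so the maximal ideal `ker ε` is
an associated prime and annihilates some `σ ≠ 0`, which is then an integral. The image of the
map `f ↦ ∑ f(σ₁) σ₂` from `A*` to `A` is an ideal, and it contains `1 = ∑ S(x₁) x₂` for any `x` in
it with `ε(x) = 1`. So this map is onto, hence bijective by dimension count, and this forces a
preimage `λ` of `1` to be a cointegral with `λ(σ) = 1`. The trace formula then shows that `ε(σ)`
and `λ(1)` are nonzero once `dim A ≠ 0` in `k`, so `σ` and `λ` can be normalized.
-/

open TensorProduct

/-- A coalgebra is cocommutative if composing the comultiplication with the braiding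
gives back the comultiplication. -/
def IsCocomm (k A : Type*) [CommSemiring k] [AddCommMonoid A] [Module k A]
    [Coalgebra k A] : Prop :=
  ∀ a : A, (TensorProduct.comm k A A) (Coalgebra.comul (R := k) a) = Coalgebra.comul (R := k) a

/-- A normalized integral of a bialgebra `A` is an element `σ` with `a * σ = ε(a) • σ`
for all `a` and `ε(σ) = 1`. -/
def IsNormalizedIntegral (k A : Type*) [CommSemiring k] [Semiring A] [Bialgebra k A]
    (σ : A) : Prop :=
  (∀ a : A, a * σ = Coalgebra.counit (R := k) a • σ) ∧ Coalgebra.counit (R := k) σ = 1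

/-- A normalized cointegral of a bialgebra `A` is a linear functional `λ` with `λ(1) = 1`
such that applying `id ⊗ λ` to `Δ(a)` and identifying `A ⊗ k` with `A` yields `λ(a) • 1`. -/
def IsNormalizedCointegral (k A : Type*) [CommSemiring k] [Semiring A] [Bialgebra k A]
    (lam : A →ₗ[k] k) : Prop :=
  lam 1 = 1 ∧ ∀ a : A,
    (TensorProduct.rid k A)
      ((TensorProduct.map (LinearMap.id : A →ₗ[k] A) lam) (Coalgebra.comul (R := k) a))
      = lam a • (1 : A)

section Hit

open Coalgebra

variable {R C : Type*} [CommSemiring R] [AddCommMonoid C] [Module R C] [Coalgebra R C]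

/-- Sweedler's `a ↼ f = ∑ f(a₁) a₂`. -/
def hit : Module.Dual R C →ₗ[R] C →ₗ[R] C :=
  LinearMap.mk₂ R (fun f a => TensorProduct.lid R C (f.rTensor C (comul a)))
    (fun f g a => by simp [LinearMap.rTensor_add])
    (fun c f a => by simp [LinearMap.rTensor_smul])
    (fun f a b => by simp)
    (fun c f a => by simp)

lemma hit_apply (f : Module.Dual R C) (a : C) :
    hit f a = TensorProduct.lid R C (f.rTensor C (comul a)) := rfl

lemma hit_eq_sum {ι : Type*} {a : C} (r : Repr R a ι) (f : Module.Dual R C) :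
    hit f a = ∑ i ∈ r.index, f (r.left i) • r.right i := by
  simp [hit_apply, ← r.eq]

@[simp]
lemma counit_hit (f : Module.Dual R C) (a : C) : counit (R := R) (hit f a) = f a := by
  have hsum := congr(TensorProduct.lid R R $(sum_map_tmul_counit_eq f a (repr := ℛ R a)))
  simp only [map_sum, TensorProduct.lid_tmul, smul_eq_mul, mul_one] at hsum
  simp [hit_eq_sum (ℛ R a), hsum]

lemma hit_hit (f h : Module.Dual R C) (a : C) : hit h (hit f a) = hit (h ∘ₗ hit f) a := by
  let r := ℛ R a
  have hcoassoc := sum_tmul_tmul_eq r (fun i => ℛ R (r.left i)) (fun i => ℛ R (r.right i))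
  let eval : C ⊗[R] (C ⊗[R] C) →ₗ[R] C :=
    (TensorProduct.lid R C).toLinearMap ∘ₗ
      TensorProduct.map f ((TensorProduct.lid R C).toLinearMap ∘ₗ h.rTensor C)
  have heval (x y z : C) : eval (x ⊗ₜ (y ⊗ₜ z)) = (f x * h y) • z := by
    simp [eval, mul_smul, smul_comm (h y)]
  simpa [hit_eq_sum r, hit_eq_sum (ℛ R (r.left _)), hit_eq_sum (ℛ R (r.right _)), heval,
    Finset.smul_sum, Finset.sum_smul, mul_smul] using congr(eval $hcoassoc).symm

lemma comul_eq_sum_tmul_hit {ι : Type*} [Fintype ι] (b : Module.Basis ι R C) (a : C) :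
    comul (R := R) a = ∑ i, b i ⊗ₜ hit (b.coord i) a := by
  conv_lhs => rw [← (ℛ R a).eq]
  simp_rw [hit_eq_sum (ℛ R a), TensorProduct.tmul_sum]
  rw [Finset.sum_comm]
  simp_rw [← TensorProduct.smul_tmul, ← TensorProduct.sum_tmul,
    Module.Basis.coord_apply, Module.Basis.sum_repr]

lemma rid_map_id_comul [Coalgebra.IsCocomm R C] (f : Module.Dual R C) (a : C) :
    TensorProduct.rid R C (TensorProduct.map LinearMap.id f (comul a)) = hit f a := by
  rw [← comm_comul R a, hit_apply]
  induction comul (R := R) a using TensorProduct.induction_on with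
  | zero => simp
  | tmul x y => simp
  | add x y hx hy => simp [hx, hy]

def Coalgebra.Repr.swap [Coalgebra.IsCocomm R C] {ι : Type*} {a : C} (r : Repr R a ι) :
    Repr R a ι where
  index := r.index
  left := r.right
  right := r.left
  eq := by simpa using congr(TensorProduct.comm R C C $(r.eq))

lemma Coalgebra.Repr.sum_counit_right_smul {ι : Type*} {a : C} (r : Repr R a ι) :
    ∑ i ∈ r.index, counit (R := R) (r.right i) • r.left i = a := by
  simpa only [map_sum, _root_.TensorProduct.rid_tmul, one_smul] using
    congr(_root_.TensorProduct.rid R C $(sum_tmul_counit_eq r))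

end Hit

section Bialgebra

open Coalgebra

variable {R A : Type*} [CommSemiring R] [Semiring A] [Bialgebra R A]

lemma hit_one (f : Module.Dual R A) : hit f (1 : A) = f 1 • 1 := by
  simp [hit_apply, Algebra.TensorProduct.one_def]

variable (R) in
def IsLeftIntegral (σ : A) : Prop :=
  ∀ a : A, a * σ = counit (R := R) a • σ

variable (R) in
def IsRightCointegral (lam : Module.Dual R A) : Prop :=
  ∀ a : A, hit lam a = lam a • 1

lemma IsLeftIntegral.smul {σ : A} (hσ : IsLeftIntegral R σ) (c : R) :
    IsLeftIntegral R (c • σ) := fun a => by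
  rw [mul_smul_comm, hσ, smul_comm]

lemma IsRightCointegral.smul {lam : Module.Dual R A} (hlam : IsRightCointegral R lam) (c : R) :
    IsRightCointegral R (c • lam) := fun a => by
  rw [map_smul, LinearMap.smul_apply, hlam, LinearMap.smul_apply, smul_smul, smul_eq_mul]

lemma isNormalizedCointegral_iff [Coalgebra.IsCocomm R A] (lam : Module.Dual R A) :
    IsNormalizedCointegral R A lam ↔ lam 1 = 1 ∧ IsRightCointegral R lam := by
  simp only [IsNormalizedCointegral, IsRightCointegral, rid_map_id_comul]

end Bialgebra

section HopfAlgebra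

open Coalgebra HopfAlgebra WithConv

variable {R A : Type*} [CommSemiring R] [Semiring A] [HopfAlgebra R A]

lemma sum_antipode_tmul_one_mul_comul {ι : Type*} {a : A} (r : Repr R a ι) :
    ∑ i ∈ r.index, (antipode R (r.left i) ⊗ₜ[R] (1 : A)) * comul (r.right i) = 1 ⊗ₜ a := by
  -- In the convolution algebra of maps `A → A ⊗ A` we have `Δ = iL ⋆ iR`, hence
  -- `(iL ∘ S) ⋆ Δ = (iL ∘ (S ⋆ id)) ⋆ iR = iR`.
  let iL : A →ₐ[R] A ⊗[R] A := Algebra.TensorProduct.includeLeft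
  let iR : A →ₐ[R] A ⊗[R] A := Algebra.TensorProduct.includeRight
  have hcomul : toConv (comul (R := R) (A := A)) =
      toConv iL.toLinearMap * toConv iR.toLinearMap := by
    ext x
    simp [iL, iR, (ℛ R x).convMul_apply, ← (ℛ R x).eq]
  have hunit : toConv (iL.toLinearMap ∘ₗ (1 : WithConv (A →ₗ[R] A)).ofConv) = 1 := by
    ext x
    simp [iL, Algebra.TensorProduct.algebraMap_apply]
  have hdist : toConv (iL.toLinearMap ∘ₗ antipode R) * toConv iL.toLinearMap =
      toConv (iL.toLinearMap ∘ₗ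
        (toConv (antipode R) * toConv (LinearMap.id : A →ₗ[R] A)).ofConv) := by
    rw [LinearMap.algHom_comp_convMul_distrib]
    simp
  have hconv : toConv (iL.toLinearMap ∘ₗ antipode R) * toConv comul = toConv iR.toLinearMap := by
    rw [hcomul, ← mul_assoc, hdist, LinearMap.antipode_mul_id, hunit, one_mul]
  simpa [iL, iR, r.convMul_apply] using congr($hconv a)

lemma IsLeftIntegral.one_tmul_mul_comul {σ : A} (hσ : IsLeftIntegral R σ) (a : A) :
    ((1 : A) ⊗ₜ[R] a) * comul σ = (antipode R a ⊗ₜ[R] (1 : A)) * comul σ := by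
  let r := ℛ R a
  calc ((1 : A) ⊗ₜ[R] a) * comul σ
      = ∑ i ∈ r.index, (antipode R (r.left i) ⊗ₜ[R] (1 : A)) * comul (r.right i * σ) := by
        simp [← sum_antipode_tmul_one_mul_comul r, Finset.sum_mul, mul_assoc]
    _ = (antipode R (∑ i ∈ r.index, counit (R := R) (r.right i) • r.left i) ⊗ₜ[R] (1 : A))
          * comul σ := by
        simp [hσ _, map_sum, TensorProduct.sum_tmul, Finset.sum_mul, ← smul_mul_assoc,
          TensorProduct.smul_tmul']
    _ = (antipode R a ⊗ₜ[R] (1 : A)) * comul σ := by rw [r.sum_counit_right_smul]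

lemma IsLeftIntegral.mul_hit {σ : A} (hσ : IsLeftIntegral R σ) (f : Module.Dual R A) (a : A) :
    a * hit f σ = hit (f ∘ₗ LinearMap.mulLeft R (antipode R a)) σ := by
  have contract_one_tmul (w : A ⊗[R] A) :
      TensorProduct.lid R A (f.rTensor A (((1 : A) ⊗ₜ a) * w)) =
        a * TensorProduct.lid R A (f.rTensor A w) := by
    induction w using TensorProduct.induction_on with
    | zero => simp
    | tmul x y => simp
    | add x y hx hy => simp [mul_add, hx, hy]
  have contract_tmul_one (x : A) (w : A ⊗[R] A) :
      TensorProduct.lid R A (f.rTensor A ((x ⊗ₜ (1 : A)) * w)) =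
        TensorProduct.lid R A ((f ∘ₗ LinearMap.mulLeft R x).rTensor A w) := by
    induction w using TensorProduct.induction_on with
    | zero => simp
    | tmul x y => simp
    | add x y hx hy => simp [mul_add, hx, hy]
  rw [hit_apply, hit_apply, ← contract_one_tmul, hσ.one_tmul_mul_comul, contract_tmul_one]

lemma IsLeftIntegral.hit_comp_mulLeft_antipode {σ : A} (hσ : IsLeftIntegral R σ)
    {lam : Module.Dual R A} (hlam : IsRightCointegral R lam) (a : A) :
    hit (lam ∘ₗ LinearMap.mulLeft R (antipode R a)) σ = lam σ • a := by
  rw [← hσ.mul_hit, hlam, mul_smul_comm, mul_one]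

lemma IsLeftIntegral.smul_id_eq_sum {σ : A} (hσ : IsLeftIntegral R σ)
    {lam : Module.Dual R A} (hlam : IsRightCointegral R lam) {ι : Type*} (r : Repr R σ ι) :
    lam σ • LinearMap.id = ∑ j ∈ r.index,
      dualTensorHom R A A
        ((lam ∘ₗ LinearMap.mulRight R (r.left j) ∘ₗ antipode R) ⊗ₜ r.right j) := by
  ext a
  simp [← hσ.hit_comp_mulLeft_antipode hlam a, hit_eq_sum r]

end HopfAlgebra

section Field

open Coalgebra HopfAlgebra

variable {k A : Type*} [Field k] [Ring A] [HopfAlgebra k A]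

lemma IsLeftIntegral.finite {σ : A} (hσ : IsLeftIntegral k σ) {lam : Module.Dual k A}
    (hlam : IsRightCointegral k lam) (hσlam : lam σ ≠ 0) : Module.Finite k A := by
  classical
  let r := ℛ k σ
  refine ⟨⟨r.index.image r.right, eq_top_iff.2 fun a _ => ?_⟩⟩
  have ha : a = (lam σ)⁻¹ • (lam σ • LinearMap.id : A →ₗ[k] A) a := by
    simp [smul_smul, inv_mul_cancel₀ hσlam]
  rw [ha, hσ.smul_id_eq_sum hlam r, LinearMap.sum_apply]
  refine Submodule.smul_mem _ _ (Submodule.sum_mem _ fun j hj => ?_)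
  simpa [dualTensorHom_apply] using
    Submodule.smul_mem _ _ (Submodule.subset_span (Finset.mem_image_of_mem r.right hj))

lemma IsLeftIntegral.apply_mul_finrank [Module.Finite k A] [Coalgebra.IsCocomm k A] {σ : A}
    (hσ : IsLeftIntegral k σ) {lam : Module.Dual k A} (hlam : IsRightCointegral k lam) :
    lam σ * Module.finrank k A = counit (R := k) σ * lam 1 := by
  let r := ℛ k σ
  have htrace := congr(LinearMap.trace k A $(hσ.smul_id_eq_sum hlam r))
  have hswap : ∑ j ∈ r.index, antipode k (r.right j) * r.left j = counit (R := k) σ • 1 :=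
    sum_antipode_mul_eq_smul r.swap
  simp only [map_smul, LinearMap.trace_id, smul_eq_mul, map_sum,
    LinearMap.trace_eq_contract_apply, contractLeft_apply] at htrace
  rw [htrace]
  simpa [map_sum, mul_comm] using congr(lam $hswap)

lemma IsLeftIntegral.exists_hit_eq_one [Module.Finite k A] {σ : A} (hσ : IsLeftIntegral k σ)
    (hσ0 : σ ≠ 0) : ∃ lam : Module.Dual k A, hit lam σ = 1 := by
  obtain ⟨f, hf⟩ : ∃ f : Module.Dual k A, f σ = 1 := Module.Projective.exists_dual_eq_one k hσ0
  let b := Module.Free.chooseBasis k A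
  let F : Module.Dual k A →ₗ[k] A := hit.flip σ
  have hrange : ∀ g : Module.Dual k A, ∀ a : A, a * hit g σ ∈ LinearMap.range F :=
    fun g a => ⟨_, (hσ.mul_hit g a).symm⟩
  let x := hit f σ
  have hx : (1 : A) = ∑ i, antipode k (b i) * hit (b.coord i) x := by
    simpa [x, hf, eq_comm] using sum_antipode_mul_eq_smul (R := k)
      { index := Finset.univ, left := b, right := fun i => hit (b.coord i) x,
        eq := (comul_eq_sum_tmul_hit b x).symm : Repr k x _ }
  obtain ⟨lam, hlam⟩ : (1 : A) ∈ LinearMap.range F := by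
    rw [hx]
    refine (LinearMap.range F).sum_mem fun i _ => ?_
    rw [hit_hit]
    exact hrange _ _
  exact ⟨lam, hlam⟩

lemma IsLeftIntegral.isRightCointegral_of_hit_eq_one [Module.Finite k A] {σ : A}
    (hσ : IsLeftIntegral k σ) {lam : Module.Dual k A} (hlam : hit lam σ = 1) :
    IsRightCointegral k lam := by
  let F : Module.Dual k A →ₗ[k] A := hit.flip σ
  have hsurj : Function.Surjective F := fun a =>
    ⟨_, (hσ.mul_hit lam a).symm.trans (by rw [hlam, mul_one])⟩
  have hinj : Function.Injective F :=
    (LinearMap.injective_iff_surjective_of_finrank_eq_finrank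
      (Subspace.dual_finrank_eq (K := k) (V := A))).2 hsurj
  have hconv (h : Module.Dual k A) : h ∘ₗ hit lam = h 1 • lam := hinj <| by
    rw [map_smul]
    show hit (h ∘ₗ hit lam) σ = h 1 • hit lam σ
    rw [← hit_hit, hlam, hit_one]
  intro a
  refine sub_eq_zero.1 <| (Module.forall_dual_apply_eq_zero_iff k _).1 fun h => ?_
  simpa [sub_eq_zero, mul_comm] using congr($(hconv h) a)

lemma IsLeftIntegral.exists_isRightCointegral_apply_eq_one [Module.Finite k A] {σ : A}
    (hσ : IsLeftIntegral k σ) (hσ0 : σ ≠ 0) :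
    ∃ lam : Module.Dual k A, IsRightCointegral k lam ∧ lam σ = 1 := by
  obtain ⟨lam, hlam⟩ := hσ.exists_hit_eq_one hσ0
  refine ⟨lam, hσ.isRightCointegral_of_hit_eq_one hlam, ?_⟩
  simpa [hlam] using (counit_hit lam σ).symm

end Field

lemma exists_ne_zero_forall_mul_eq_smul {k B : Type*} [Field k] [CommRing B] [Algebra k B]
    [Module.Finite k B] (χ : B →ₐ[k] k) : ∃ x : B, x ≠ 0 ∧ ∀ b : B, b * x = χ b • x := by
  have : IsArtinianRing B := IsArtinianRing.of_finite k B
  have hmax : (RingHom.ker χ).IsMaximal :=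
    RingHom.ker_isMaximal_of_surjective χ fun c => ⟨algebraMap k B c, by simp⟩
  have hass : RingHom.ker χ ∈ associatedPrimes B B :=
    Module.associatedPrimes.minimalPrimes_annihilator_subset_associatedPrimes B B
      (IsArtinianRing.mem_minimalPrimes (by simp [Module.annihilator_eq_bot.2]))
  obtain ⟨-, x, hx⟩ := isAssociatedPrime_iff.1 hass
  refine ⟨x, ?_, fun b => ?_⟩
  · rintro rfl
    exact hmax.ne_top (by simpa [Submodule.colon_singleton_zero] using hx)
  · have : b - algebraMap k B (χ b) ∈ RingHom.ker χ := by simp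
    rw [hx, Submodule.mem_colon_singleton, Submodule.mem_bot, smul_eq_mul, sub_mul,
      sub_eq_zero, ← Algebra.smul_def] at this
    exact this

lemma exists_isLeftIntegral_ne_zero {k A : Type*} [Field k] [CommRing A] [Bialgebra k A]
    [Module.Finite k A] : ∃ σ : A, IsLeftIntegral k σ ∧ σ ≠ 0 := by
  obtain ⟨σ, hσ0, hσ⟩ := exists_ne_zero_forall_mul_eq_smul (Bialgebra.counitAlgHom k A)
  exact ⟨σ, hσ, hσ0⟩

/-- A bicommutative Hopf algebra has a finite volume if and only if it is finite-dimensional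
and the image of its dimension in the ground field is nonzero. -/
theorem finite_volume_iff_finiteDimensional_finrank_ne_zero
    (k A : Type*) [Field k] [CommRing A] [HopfAlgebra k A] (hcc : IsCocomm k A) :
    (∃ (σ : A) (lam : A →ₗ[k] k),
        IsNormalizedIntegral k A σ ∧ IsNormalizedCointegral k A lam ∧ lam σ ≠ 0) ↔
      (FiniteDimensional k A ∧ (Module.finrank k A : k) ≠ 0) := by
  have : Coalgebra.IsCocomm k A := ⟨LinearMap.ext hcc⟩
  constructor
  · rintro ⟨σ, lam, ⟨hσ, hεσ⟩, hlam, hσlam⟩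
    obtain ⟨hlam1, hlam⟩ := (isNormalizedCointegral_iff lam).1 hlam
    have : Module.Finite k A := IsLeftIntegral.finite hσ hlam hσlam
    refine ⟨this, fun h0 => ?_⟩
    simpa [hεσ, hlam1, h0] using IsLeftIntegral.apply_mul_finrank hσ hlam
  · rintro ⟨hfin, hdim⟩
    obtain ⟨σ, hσ, hσ0⟩ := exists_isLeftIntegral_ne_zero (k := k) (A := A)
    obtain ⟨lam, hlam, hlamσ⟩ := hσ.exists_isRightCointegral_apply_eq_one hσ0
    have htrace := hσ.apply_mul_finrank hlam
    rw [hlamσ, one_mul] at htrace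
    obtain ⟨hεσ, hlam1⟩ := mul_ne_zero_iff.1 (htrace ▸ hdim)
    refine ⟨(Coalgebra.counit (R := k) σ)⁻¹ • σ, (lam 1)⁻¹ • lam, ⟨hσ.smul _, by simp [hεσ]⟩,
      (isNormalizedCointegral_iff _).2 ⟨by simp [hlam1], hlam.smul _⟩, ?_⟩
    simp [hlamσ, hεσ, hlam1]
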